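/- For 0 ≤ 2k ≤ 2p ≤ n, the q-binomial product identity [n choose 2k]_q · [n-2k choose 2p-2k]_q · M_q(2k-1) · M_q(2p-2k-1) = [n choose 2p]_q · M_q(2p-1) · [p choose k]_{q²} holds. -/

import Mathlib

/-! Splitting `[2m]_q! = M_q(2m-1) · (1+q)^m · [m]_{q²}!` according to the parity of the factors
turns `[2p choose 2k]_q · M_q(2k-1) · M_q(2p-2k-1)` into `M_q(2p-1) · [p choose k]_{q²}`, the powers
of `1 + q` cancelling. The identity then follows from the trinomial revision
`[n choose 2k]_q [n-2k choose 2p-2k]_q = [n choose 2p]_q [2p choose 2k]_q`. -/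

open Polynomial Finset
noncomputable section
abbrev Fq : Type := RatFunc ℚ
def qv : Fq := RatFunc.X
def qint (n : ℕ) : Fq := ∑ i ∈ Finset.range n, qv ^ i
def qfact (n : ℕ) : Fq := ∏ i ∈ Finset.range n, qint (i + 1)
def qbinom (n k : ℕ) : Fq := if k ≤ n then qfact n / (qfact k * qfact (n - k)) else 0
def qint2 (n : ℕ) : Fq := ∑ i ∈ Finset.range n, qv ^ (2 * i)
def qfact2 (n : ℕ) : Fq := ∏ i ∈ Finset.range n, qint2 (i + 1)
def qbinom2 (n k : ℕ) : Fq := if k ≤ n then qfact2 n / (qfact2 k * qfact2 (n - k)) else 0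
def Modd (k : ℕ) : Fq := ∏ j ∈ Finset.range k, qint (2 * j + 1)

-- The underlying polynomial takes the value `n ≠ 0` at `q = 1`.
lemma sum_range_qv_pow_ne_zero (f : ℕ → ℕ) {n : ℕ} (hn : 0 < n) :
    ∑ i ∈ range n, qv ^ f i ≠ 0 := by
  have hpoly : (∑ i ∈ range n, X ^ f i : ℚ[X]) ≠ 0 := fun h => by
    have := congrArg (eval 1) h
    simp only [eval_finsetSum, eval_pow, eval_X, one_pow, sum_const, card_range, nsmul_eq_mul,
      mul_one, eval_zero, Nat.cast_eq_zero] at this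
    omega
  simpa [qv, map_sum, map_pow, RatFunc.algebraMap_X] using RatFunc.algebraMap_ne_zero hpoly

lemma qint_ne_zero {n : ℕ} (hn : 0 < n) : qint n ≠ 0 :=
  sum_range_qv_pow_ne_zero id hn

lemma qint2_ne_zero {n : ℕ} (hn : 0 < n) : qint2 n ≠ 0 :=
  sum_range_qv_pow_ne_zero (2 * ·) hn

lemma qfact_ne_zero (n : ℕ) : qfact n ≠ 0 :=
  prod_ne_zero_iff.mpr fun i _ => qint_ne_zero i.succ_pos

lemma qfact2_ne_zero (n : ℕ) : qfact2 n ≠ 0 :=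
  prod_ne_zero_iff.mpr fun i _ => qint2_ne_zero i.succ_pos

lemma Modd_ne_zero (n : ℕ) : Modd n ≠ 0 :=
  prod_ne_zero_iff.mpr fun j _ => qint_ne_zero (2 * j).succ_pos

lemma one_add_qv_ne_zero : 1 + qv ≠ 0 := by
  simpa [qint, sum_range_succ, add_comm] using qint_ne_zero two_pos

lemma qint_two_mul (m : ℕ) : qint (2 * m) = (1 + qv) * qint2 m := by
  induction m with
  | zero => simp [qint, qint2]
  | succ m ih =>
    unfold qint qint2 at *
    rw [mul_add_one, sum_range_succ, sum_range_succ, sum_range_succ, ih]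
    ring

lemma qfact_two_mul (m : ℕ) : qfact (2 * m) = Modd m * (1 + qv) ^ m * qfact2 m := by
  induction m with
  | zero => simp [qfact, Modd, qfact2]
  | succ m ih =>
    unfold qfact Modd qfact2 at *
    rw [mul_add_one, prod_range_succ, prod_range_succ, ih, prod_range_succ, prod_range_succ,
      show 2 * m + 1 + 1 = 2 * (m + 1) by ring, qint_two_mul]
    ring

lemma qbinom_mul_qbinom {n m k : ℕ} (hkm : k ≤ m) (hmn : m ≤ n) :
    qbinom n k * qbinom (n - k) (m - k) = qbinom n m * qbinom m k := by
  rw [qbinom, qbinom, qbinom, qbinom, if_pos (hkm.trans hmn), if_pos (by omega), if_pos hmn,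
    if_pos hkm, show n - k - (m - k) = n - m by omega]
  have := qfact_ne_zero (n - k)
  have := qfact_ne_zero m
  have := qfact_ne_zero k
  have := qfact_ne_zero (m - k)
  have := qfact_ne_zero (n - m)
  field_simp

lemma qbinom_two_mul_mul_Modd {p k : ℕ} (hkp : k ≤ p) :
    qbinom (2 * p) (2 * k) * Modd k * Modd (p - k) = Modd p * qbinom2 p k := by
  rw [qbinom, qbinom2, if_pos (by omega), if_pos hkp, ← Nat.mul_sub, qfact_two_mul,
    qfact_two_mul, qfact_two_mul, ← pow_mul_pow_sub _ hkp]
  have := qfact2_ne_zero k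
  have := qfact2_ne_zero (p - k)
  have := Modd_ne_zero k
  have := Modd_ne_zero (p - k)
  have := one_add_qv_ne_zero
  field_simp

/-- The q-binomial product identity relating q- and q²-binomials through . -/
theorem stmt_10 (n p k : ℕ) (hkp : k ≤ p) (hpn : 2 * p ≤ n) :
    qbinom n (2 * k) * qbinom (n - 2 * k) (2 * p - 2 * k) * Modd k * Modd (p - k)
      = qbinom n (2 * p) * Modd p * qbinom2 p k := by
  rw [qbinom_mul_qbinom (by omega) hpn, mul_assoc (qbinom n (2 * p)), mul_assoc, mul_assoc,
    ← mul_assoc (qbinom (2 * p) _), qbinom_two_mul_mul_Modd hkp, mul_assoc]
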